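/- Let ε ∈ (0,1/4), 0 < p < 1/2, 1 ≤ d ≤ n, let m₀ and r be positive integers, set m₁ = m₀ + 2r, and let κ be a real number with m₁ < min{m₀/(2ε), κ} and κ·d ≤ n. Suppose M ∈ M_{n,d} satisfies |S_J| ≥ (1−ε)·d·|J| for every J ⊆ [n] with |J| ≤ κ. Then Mx ≠ 0 for every x ∈ T₂, where T₂ = {x ∈ AC⁺(p) : for some permutation π of [n] with |x_{π(1)}| ≥ … ≥ |x_{π(n)}|, either |x_{π(m₀)}| = 0, or both |x_{π(m₀)}| = 1 and |{i > m₀ : |x_{π(i)} − λ_x| ≥ 1/(2d)}| < 2r}. -/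

import Mathlib

/-!
A row of `M` with exactly one neighbour `j` in a column set `J` (a unique neighbour of `J`)
gives, when `M x = 0`, that `x j` is minus the sum of the other `d - 1` entries of `x` on that
row. Double counting shows there are at least `2 |S_J| - d |J| ≥ (1 - 2ε) d |J|` unique
neighbours, more than the at most `d |B|` rows meeting any `B` with `|B| < (1 - 2ε) |J|`, so
`j` can be taken outside `B`.

If `x_{π(m₀)} = 0`, take `J = supp x`: the other entries vanish, so `x j = 0`, absurd. If
`x_{π(m₀)} = 1`, take `J` the coordinates at distance `≥ 1/(2d)` from `λ`: it has fewer than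
`m₀ + 2r` elements and contains the `≥ m₀` coordinates with `|x j| ≥ 1`; take `B` the others.
A row outside `S_J` (it exists as `d |J| < n`) gives `λ < 1/(2d)`, whence
`|x j| ≤ (d - 1)(λ + 1/(2d)) < 1` for the unique neighbour `j`, absurd.
-/

open Finset
open scoped Classical

/-- `Mnd n d` is the set of `n × n` matrices with `0/1` entries (encoded as `Bool`)
such that every row and every column contains exactly `d` ones. -/
def Mnd (n d : ℕ) : Finset (Fin n → Fin n → Bool) :=
  Finset.univ.filter fun M =>
    (∀ i, (Finset.univ.filter fun j => M i j = true).card = d) ∧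
    (∀ j, (Finset.univ.filter fun i => M i j = true).card = d)

/-- The real `0/1` matrix associated to a Bool matrix. -/
def toRealM {n : ℕ} (M : Fin n → Fin n → Bool) : Matrix (Fin n) (Fin n) ℝ :=
  Matrix.of fun i j => if M i j then (1 : ℝ) else 0

/-- `SJ M J = ⋃_{j ∈ J} supp X_j`: the set of row indices at which some column of `M`
indexed by `J` has a one. -/
def SJ {n : ℕ} (M : Fin n → Fin n → Bool) (J : Finset (Fin n)) : Finset (Fin n) :=
  Finset.univ.filter fun i => ∃ j ∈ J, M i j = true

/-- Membership in the set `T₂`: `x ∈ AC⁺(p)` (with value `lam = λ_x ≥ 0`, unique since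
`p < 1/2`) admitting a non-increasing rearrangement `i ↦ |x (π i)|` such that either
its `m₀`-th entry (1-indexed) is `0`, or it equals `1` and fewer than `2r` positions
`i > m₀` satisfy `|x^*_i - λ_x| ≥ 1/(2d)`. -/
def memT2 (n d m₀ r : ℕ) (p : ℝ) (x : Fin n → ℝ) : Prop :=
  x ≠ 0 ∧ ∃ lam : ℝ,
    (1 - p) * n ≤ ((Finset.univ.filter fun i => x i = lam).card : ℝ) ∧
    0 ≤ lam ∧
    ∃ π : Equiv.Perm (Fin n),
      (∀ i j : Fin n, i ≤ j → |x (π j)| ≤ |x (π i)|) ∧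
      ∃ i₀ : Fin n, (i₀ : ℕ) + 1 = m₀ ∧
        (|x (π i₀)| = 0 ∨
          (|x (π i₀)| = 1 ∧
            (Finset.univ.filter fun i : Fin n =>
              m₀ < (i : ℕ) + 1 ∧ 1 / (2 * d) ≤ |x (π i) - lam|).card < 2 * r))

open Matrix

lemma toRealM_mulVec_apply {n : ℕ} (M : Fin n → Fin n → Bool) (x : Fin n → ℝ) (i : Fin n) :
    (toRealM M *ᵥ x) i = ∑ j with M i j = true, x j := by
  simp [mulVec, dotProduct, toRealM, sum_filter]

lemma abs_le_of_sum_eq_zero {ι : Type*} [DecidableEq ι] {R : Finset ι} {x : ι → ℝ} {j : ι}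
    {c : ℝ} (hj : j ∈ R) (hsum : ∑ k ∈ R, x k = 0) (hc : ∀ k ∈ R.erase j, |x k| ≤ c) :
    |x j| ≤ (#R - 1 : ℝ) * c := by
  have hxj : x j = -∑ k ∈ R.erase j, x k := by linarith [add_sum_erase R x hj]
  calc |x j| ≤ ∑ k ∈ R.erase j, |x k| := by rw [hxj, abs_neg]; exact abs_sum_le_sum_abs _ _
    _ ≤ #(R.erase j) • c := sum_le_card_nsmul _ _ _ hc
    _ = (#R - 1 : ℝ) * c := by
      rw [card_erase_of_mem hj, nsmul_eq_mul, Nat.cast_pred (card_pos.2 ⟨j, hj⟩)]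

lemma abs_lt_of_sum_eq_zero {ι : Type*} {R : Finset ι} {x : ι → ℝ} {lam δ : ℝ}
    (hR : R.Nonempty) (hsum : ∑ k ∈ R, x k = 0) (hδ : ∀ k ∈ R, |x k - lam| < δ) :
    |lam| < δ := by
  have hcard : (0 : ℝ) < #R := by exact_mod_cast hR.card_pos
  have : #R * |lam| < #R * δ := calc
    #R * |lam| = |∑ k ∈ R, (x k - lam)| := by
      rw [sum_sub_distrib, hsum, sum_const, nsmul_eq_mul, zero_sub, abs_neg, abs_mul,
        Nat.abs_cast]
    _ ≤ ∑ k ∈ R, |x k - lam| := abs_sum_le_sum_abs _ _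
    _ < ∑ k ∈ R, δ := sum_lt_sum_of_nonempty hR hδ
    _ = #R * δ := by rw [sum_const, nsmul_eq_mul]
  exact lt_of_mul_lt_mul_left this hcard.le

section UniqueNeighbors

variable {n d : ℕ}

def uniqueNeighbors (M : Fin n → Fin n → Bool) (J : Finset (Fin n)) : Finset (Fin n) :=
  {i | #{j ∈ J | M i j = true} = 1}

variable {M : Fin n → Fin n → Bool}

lemma card_SJ_le (hcol : ∀ j, #{i | M i j = true} ≤ d) (J : Finset (Fin n)) :
    #(SJ M J) ≤ d * #J := by
  have hSJ : SJ M J = J.biUnion fun j => {i | M i j = true} := by ext i; simp [SJ]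
  calc #(SJ M J) ≤ ∑ j ∈ J, #{i | M i j = true} := hSJ ▸ card_biUnion_le
    _ ≤ ∑ _j ∈ J, d := sum_le_sum fun j _ => hcol j
    _ = d * #J := by rw [sum_const, smul_eq_mul, mul_comm]

lemma two_mul_card_SJ_le (hcol : ∀ j, #{i | M i j = true} ≤ d) (J : Finset (Fin n)) :
    2 * #(SJ M J) ≤ d * #J + #(uniqueNeighbors M J) := by
  set deg : Fin n → ℕ := fun i => #{j ∈ J | M i j = true}
  have hedges : ∑ i, deg i ≤ d * #J := by
    have := sum_card_bipartiteAbove_eq_sum_card_bipartiteBelow (fun i j => M i j = true)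
      (s := univ) (t := J)
    simp only [bipartiteAbove, bipartiteBelow] at this
    calc ∑ i, deg i = ∑ j ∈ J, #{i | M i j = true} := this
      _ ≤ ∑ _j ∈ J, d := sum_le_sum fun j _ => hcol j
      _ = d * #J := by rw [sum_const, smul_eq_mul, mul_comm]
  -- a row of `S_J` meets `J` at least twice unless it is a unique neighbour
  have hrow : ∀ i ∈ SJ M J, 2 ≤ deg i + if i ∈ uniqueNeighbors M J then 1 else 0 := by
    intro i hi
    obtain ⟨j, hj, hij⟩ : ∃ j ∈ J, M i j = true := by simpa [SJ] using hi
    have hdeg : 0 < deg i := card_pos.2 ⟨j, mem_filter.2 ⟨hj, hij⟩⟩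
    have hu : i ∈ uniqueNeighbors M J ↔ deg i = 1 := by simp [uniqueNeighbors, deg]
    split_ifs with h <;> [have := hu.1 h; have := mt hu.2 h] <;> omega
  calc 2 * #(SJ M J) = ∑ _i ∈ SJ M J, 2 := by rw [sum_const, smul_eq_mul, mul_comm]
    _ ≤ ∑ i ∈ SJ M J, (deg i + if i ∈ uniqueNeighbors M J then 1 else 0) := sum_le_sum hrow
    _ = ∑ i ∈ SJ M J, deg i + #{i ∈ SJ M J | i ∈ uniqueNeighbors M J} := by
      rw [sum_add_distrib, sum_boole, Nat.cast_id]
    _ ≤ ∑ i, deg i + #(uniqueNeighbors M J) :=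
      add_le_add (sum_le_sum_of_subset (subset_univ _))
        (card_le_card fun i hi => (mem_filter.1 hi).2)
    _ ≤ d * #J + #(uniqueNeighbors M J) := by omega

lemma exists_uniqueNeighbor_not_mem (hcol : ∀ j, #{i | M i j = true} ≤ d)
    {J B : Finset (Fin n)} (h : d * #B + d * #J < 2 * #(SJ M J)) :
    ∃ i, ∃ j ∈ J, j ∉ B ∧ M i j = true ∧ ∀ k ∈ J, M i k = true → k = j := by
  have hlt : #(SJ M B) < #(uniqueNeighbors M J) := by
    have := card_SJ_le hcol B
    have := two_mul_card_SJ_le hcol J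
    omega
  obtain ⟨i, hiU, hiB⟩ := exists_mem_notMem_of_card_lt_card hlt
  obtain ⟨j, hj⟩ := card_eq_one.1 (mem_filter.1 hiU).2
  have hmem : ∀ k, k ∈ J ∧ M i k = true ↔ k = j := fun k => by
    simpa using congrArg (k ∈ ·) hj
  obtain ⟨hjJ, hij⟩ := (hmem j).2 rfl
  refine ⟨i, j, hjJ, fun hjB => hiB ?_, hij, fun k hk hik => (hmem k).1 ⟨hk, hik⟩⟩
  simpa [SJ] using ⟨j, hjB, hij⟩

lemma exists_abs_le_of_mulVec_eq_zero (hrow : ∀ i, #{j | M i j = true} = d)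
    (hcol : ∀ j, #{i | M i j = true} ≤ d) {x : Fin n → ℝ} (hMx : toRealM M *ᵥ x = 0)
    {J B : Finset (Fin n)} (h : d * #B + d * #J < 2 * #(SJ M J)) {c : ℝ}
    (hc : ∀ k ∉ J, |x k| ≤ c) :
    ∃ j ∈ J, j ∉ B ∧ |x j| ≤ (d - 1 : ℝ) * c := by
  obtain ⟨i, j, hjJ, hjB, hij, huniq⟩ := exists_uniqueNeighbor_not_mem hcol h
  refine ⟨j, hjJ, hjB, ?_⟩
  have hsum : ∑ k with M i k = true, x k = 0 := by
    rw [← toRealM_mulVec_apply, hMx, Pi.zero_apply]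
  have hothers : ∀ k ∈ ({k | M i k = true} : Finset _).erase j, |x k| ≤ c := by
    intro k hk
    obtain ⟨hkj, hik⟩ := mem_erase.1 hk
    exact hc k fun hkJ => hkj (huniq k hkJ (by simpa using hik))
  simpa only [hrow] using abs_le_of_sum_eq_zero (by simpa using hij) hsum hothers

end UniqueNeighbors

section Rearrangement

variable {n : ℕ} {x : Fin n → ℝ} {π : Equiv.Perm (Fin n)}

lemma card_lt_abs_le_of_antitone (hπ : Antitone fun i => |x (π i)|) {i₀ : Fin n} {t : ℝ}
    (ht : |x (π i₀)| ≤ t) : #{j | t < |x j|} ≤ i₀ := by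
  have hperm : #{i | t < |x (π i)|} = #{j | t < |x j|} := card_equiv π (by simp)
  rw [← hperm, ← Fin.card_Iio i₀]
  refine card_le_card fun i hi => mem_Iio.2 (lt_of_not_ge fun hle => ?_)
  exact absurd ((hπ hle).trans ht) (not_le.2 (mem_filter.1 hi).2)

lemma le_card_le_abs_of_antitone (hπ : Antitone fun i => |x (π i)|) {i₀ : Fin n} {t : ℝ}
    (ht : t ≤ |x (π i₀)|) : i₀ + 1 ≤ #{j | t ≤ |x j|} := by
  have hperm : #{i | t ≤ |x (π i)|} = #{j | t ≤ |x j|} := card_equiv π (by simp)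
  rw [← hperm, ← Fin.card_Iic i₀]
  exact card_le_card fun i hi => mem_filter.2 ⟨mem_univ _, ht.trans (hπ (mem_Iic.1 hi))⟩

end Rearrangement

lemma card_filter_le_add_card_tail {n : ℕ} (p : Fin n → Prop) [DecidablePred p] (m : ℕ) :
    #{i | p i} ≤ m + #{i : Fin n | m < (i : ℕ) + 1 ∧ p i} := by
  have hhead : #{i : Fin n | (i : ℕ) < m} ≤ m :=
    (card_le_card_of_injOn Fin.val (fun i hi => by simpa using hi) Fin.val_injective.injOn).trans
      (card_range m).le
  have hsplit : ({i | p i} : Finset (Fin n)) ⊆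
      ({i : Fin n | (i : ℕ) < m} : Finset _) ∪ ({i : Fin n | m < (i : ℕ) + 1 ∧ p i} : Finset _) :=
    fun i hi => by
      simp only [mem_union, mem_filter, mem_univ, true_and] at hi ⊢
      exact (lt_or_ge _ _).imp_right fun h => ⟨by omega, hi⟩
  exact (card_le_card hsplit).trans ((card_union_le _ _).trans (by omega))

section Kernel

variable {n d : ℕ} {M : Fin n → Fin n → Bool}

theorem toRealM_mulVec_ne_zero_of_expansion_support (hrow : ∀ i, #{j | M i j = true} = d)
    (hcol : ∀ j, #{i | M i j = true} ≤ d) (hd : 1 ≤ d) {ε : ℝ} (hε : ε < 1 / 2)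
    {x : Fin n → ℝ} (hx : x ≠ 0)
    (hexp : (1 - ε) * d * #{j | x j ≠ 0} ≤ #(SJ M {j | x j ≠ 0})) :
    toRealM M *ᵥ x ≠ 0 := by
  intro hMx
  set J : Finset (Fin n) := {j | x j ≠ 0}
  have hJ : (0 : ℝ) < #J := by
    obtain ⟨j, hj⟩ := Function.ne_iff.1 hx
    exact_mod_cast card_pos.2 ⟨j, by simpa [J] using hj⟩
  have hd0 : (0 : ℝ) < d := by exact_mod_cast hd
  have h : d * #(∅ : Finset (Fin n)) + d * #J < 2 * #(SJ M J) := by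
    have : (d : ℝ) * #J < 2 * #(SJ M J) := by nlinarith [mul_pos hd0 hJ]
    simpa using (by exact_mod_cast this : d * #J < 2 * #(SJ M J))
  obtain ⟨j, hjJ, -, hj⟩ :=
    exists_abs_le_of_mulVec_eq_zero hrow hcol hMx h (c := 0) fun k hk => by simp_all [J]
  exact (mem_filter.1 hjJ).2 (abs_nonpos_iff.1 (by simpa using hj))

theorem toRealM_mulVec_ne_zero_of_expansion_deviations (hrow : ∀ i, #{j | M i j = true} = d)
    (hcol : ∀ j, #{i | M i j = true} ≤ d) (hd : 1 ≤ d) {x : Fin n → ℝ} {lam ε : ℝ}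
    (hlam : 0 ≤ lam)
    (hA : d * #{j | 1 / (2 * (d : ℝ)) ≤ |x j - lam|} < n)
    (hexp : (1 - ε) * d * #{j | 1 / (2 * (d : ℝ)) ≤ |x j - lam|} ≤
      #(SJ M {j | 1 / (2 * (d : ℝ)) ≤ |x j - lam|}))
    (hT : 2 * ε * #{j | 1 / (2 * (d : ℝ)) ≤ |x j - lam|} < #{j | 1 ≤ |x j|}) :
    toRealM M *ᵥ x ≠ 0 := by
  intro hMx
  set δ : ℝ := 1 / (2 * d)
  set A : Finset (Fin n) := {j | δ ≤ |x j - lam|}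
  set T : Finset (Fin n) := {j | 1 ≤ |x j|}
  have hd1 : (1 : ℝ) ≤ d := by exact_mod_cast hd
  have hd0 : (0 : ℝ) < d := by linarith
  have hδ : δ ≤ 1 / 2 := by
    rw [div_le_div_iff₀ (by positivity) (by norm_num)]; linarith
  have hnotA : ∀ k ∉ A, |x k - lam| < δ := fun k hk => by simpa [A] using hk
  -- a row avoiding `A` exists since `|S_A| ≤ d |A| < n`, and it forces `λ < δ`
  have hlamδ : lam < δ := by
    obtain ⟨i, hi⟩ : ∃ i, i ∉ SJ M A := by
      by_contra! h
      have := card_SJ_le hcol A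
      rw [eq_univ_of_forall h, card_univ, Fintype.card_fin] at this
      omega
    have hR : ({j | M i j = true} : Finset _).Nonempty := card_pos.1 (by rw [hrow]; omega)
    refine (le_abs_self lam).trans_lt (abs_lt_of_sum_eq_zero hR ?_ fun k hk => hnotA k ?_)
    · rw [← toRealM_mulVec_apply, hMx, Pi.zero_apply]
    · exact fun hkA => hi (by simpa [SJ] using ⟨k, hkA, by simpa using hk⟩)
  have hTA : T ⊆ A := fun j hj => by
    have h1 : 1 ≤ |x j| := (mem_filter.1 hj).2
    have h2 := abs_sub_abs_le_abs_sub (x j) lam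
    rw [abs_of_nonneg hlam] at h2
    exact mem_filter.2 ⟨mem_univ _, by linarith⟩
  have h : d * #(A \ T) + d * #A < 2 * #(SJ M A) := by
    have hcard : (#(A \ T) : ℝ) = #A - #T := by
      rw [← card_sdiff_add_card_eq_card hTA]; push_cast; ring
    have : (d : ℝ) * #(A \ T) + d * #A < 2 * #(SJ M A) := by
      rw [hcard]; nlinarith [mul_lt_mul_of_pos_left hT hd0]
    exact_mod_cast this
  obtain ⟨j, hjA, hjAT, hj⟩ := exists_abs_le_of_mulVec_eq_zero hrow hcol hMx h (c := lam + δ)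
    fun k hk => by
      have := abs_sub_abs_le_abs_sub (x k) lam
      rw [abs_of_nonneg hlam] at this
      linarith [hnotA k hk]
  have hjT : 1 ≤ |x j| := (mem_filter.1 (by_contra fun h => hjAT (mem_sdiff.2 ⟨hjA, h⟩))).2
  -- `(d - 1)(λ + δ) ≤ (d - 1) ⋅ 2δ = 1 - 1/d`
  have hsmall : (d - 1 : ℝ) * (lam + δ) < 1 := by
    have : (d - 1 : ℝ) * (2 * δ) = 1 - 1 / d := by simp only [δ]; field_simp
    nlinarith [mul_le_mul_of_nonneg_left (by linarith : lam + δ ≤ 2 * δ) (sub_nonneg.2 hd1),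
      one_div_pos.2 hd0]
  linarith

end Kernel

theorem lem_T2_general (n d m₀ r : ℕ) (ε p κ : ℝ) (M : Fin n → Fin n → Bool)
    (hε0 : 0 < ε) (hε1 : ε < 1 / 4)
    (hd1 : 1 ≤ d)
    (hm1 : ((m₀ + 2 * r : ℕ) : ℝ) < min ((m₀ : ℝ) / (2 * ε)) κ)
    (hκ : κ * d ≤ n)
    (hM : M ∈ Mnd n d)
    (hexp : ∀ J : Finset (Fin n), (J.card : ℝ) ≤ κ →
      (1 - ε) * d * J.card ≤ ((SJ M J).card : ℝ)) :
    ∀ x : Fin n → ℝ, memT2 n d m₀ r p x → (toRealM M).mulVec x ≠ 0 := by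
  rintro x ⟨hx0, lam, -, hlam0, π, hπ, i₀, rfl, hzero | ⟨hone, hcnt⟩⟩
  all_goals
    obtain ⟨hrow, hcol⟩ := (mem_filter.1 hM).2
    obtain ⟨hm₀ε, hm₀κ⟩ := lt_min_iff.1 hm1
    push_cast at hm₀ε hm₀κ
  · have hsupp : (#{j | x j ≠ 0} : ℝ) ≤ i₀ := by
      exact_mod_cast (by simpa only [abs_pos] using card_lt_abs_le_of_antitone hπ hzero.le)
    refine toRealM_mulVec_ne_zero_of_expansion_support hrow (fun j => (hcol j).le) hd1
      (by linarith) hx0 (hexp _ (by linarith [(by positivity : (0 : ℝ) ≤ r)]))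
  · set A : Finset (Fin n) := {j | 1 / (2 * d) ≤ |x j - lam|}
    have hA : (#A : ℝ) < i₀ + 1 + 2 * r := by
      have hperm : #{i | 1 / (2 * d) ≤ |x (π i) - lam|} = #A := card_equiv π (by simp [A])
      have := hperm ▸
        card_filter_le_add_card_tail (fun i => 1 / (2 * d) ≤ |x (π i) - lam|) (i₀ + 1)
      exact_mod_cast (by omega : #A < i₀ + 1 + 2 * r)
    have hT : (i₀ + 1 : ℝ) ≤ #{j | 1 ≤ |x j|} := by
      exact_mod_cast le_card_le_abs_of_antitone hπ hone.ge
    refine toRealM_mulVec_ne_zero_of_expansion_deviations hrow (fun j => (hcol j).le) hd1 hlam0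
      ?_ (hexp A (by linarith)) ?_
    · have : (d : ℝ) * #A < n := by nlinarith [(by exact_mod_cast hd1 : (1 : ℝ) ≤ d)]
      exact (by exact_mod_cast this : d * #A < n)
    · have := (lt_div_iff₀ (by positivity)).1 hm₀ε
      nlinarith

/-- Lemma 4.5 of the paper (with the expansion hypothesis made explicit via `κ`):
if every column set `J` with `|J| ≤ κ` satisfies `|S_J| ≥ (1-ε) d |J|`, then
`M x ≠ 0` for every `x ∈ T₂`. -/
theorem lem_T2 (n d m₀ r : ℕ) (ε p κ : ℝ) (M : Fin n → Fin n → Bool)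
    (hε0 : 0 < ε) (hε1 : ε < 1 / 4)
    (hp0 : 0 < p) (hp1 : p < 1 / 2)
    (hd1 : 1 ≤ d) (hdn : d ≤ n)
    (hm0 : 1 ≤ m₀) (hr : 1 ≤ r)
    (hm1 : ((m₀ + 2 * r : ℕ) : ℝ) < min ((m₀ : ℝ) / (2 * ε)) κ)
    (hκ : κ * d ≤ n)
    (hM : M ∈ Mnd n d)
    (hexp : ∀ J : Finset (Fin n), (J.card : ℝ) ≤ κ →
      (1 - ε) * d * J.card ≤ ((SJ M J).card : ℝ)) :
    ∀ x : Fin n → ℝ, memT2 n d m₀ r p x → (toRealM M).mulVec x ≠ 0 :=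
  lem_T2_general n d m₀ r ε p κ M hε0 hε1 hd1 hm1 hκ hM hexp
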